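/- Let u₀ : ℝ → ℝ be an even, 2π-periodic continuous function with u₀(x) > 0 for 0 < |x| ≤ π, such that α₀ := sup_{0<|x|≤π} |x/(2u₀(x))| is finite and F₀(x) := (𝓛u₀(x) − u₀(x)²)/(2|x|·u₀(x)) is essentially bounded on [−π, π]; set δ₀ := ‖F₀‖_{L^∞}. Let T₀ be the linear operator defined by T₀v(x) := (1/(2|x|·u₀(x)))·∫₀^π (K(x−y) + K(x+y) − 2K(y))·y·v(y) dy, and assume T₀ is a bounded linear operator on L^∞ of the circle with operator norm ‖T₀‖ ≤ c for some constant c < 1; set β := 1/(1−c). If δ₀ ≤ 1/(4α₀β²), then: (i) I − T₀ is invertible on L^∞ with ‖(I−T₀)^{−1}‖ ≤ β; (ii) for every ε₀ with (1 − √(1 − 4α₀β²δ₀))/(2α₀β) ≤ ε₀ ≤ 1/(2α₀β), the map G₀(v) := (I−T₀)^{−1}(F₀ − (|x|/(2u₀))·v²) maps the set X_{ε₀} := {v ∈ L^∞ : v even, ‖v‖_{L^∞} ≤ ε₀} into itself and satisfies ‖G₀(v) − G₀(w)‖_{L^∞} ≤ 2α₀βε₀·‖v − w‖_{L^∞} for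 all v, w ∈ X_{ε₀}; (iii) consequently, if moreover ε₀ < 1/(2α₀β), there is a unique v₀ ∈ X_{ε₀} with (I − T₀)v₀ = F₀ − (|x|/(2u₀))·v₀². -/

import Mathlib

open Real MeasureTheory

noncomputable def whithamKernel (x : ℝ) : ℝ :=
  1 / Real.sqrt (2 * Real.pi * |x|)
    + (1 / Real.pi) *
      ∑' m : ℕ, (-1 : ℝ) ^ m * (riemannZeta ((1 : ℂ) / 2 - 2 * (m : ℂ))).re * x ^ (2 * m)
          / (2 * m).factorial
    + (1 / Real.pi) *
      ∑' n : ℕ, ((1 - Real.sqrt (Real.tanh ((n : ℝ) + 1))) / Real.sqrt ((n : ℝ) + 1))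
          * Real.cos (((n : ℝ) + 1) * x)

/-- The operator `𝓛 u(x) = (1/2)∫_{-π}^{π} (K(x-y)+K(x+y)-2K(y)) u(y) dy`. -/
noncomputable def Lcal (u : ℝ → ℝ) (x : ℝ) : ℝ :=
  (1 / 2) * ∫ y in (-Real.pi)..Real.pi,
    (whithamKernel (x - y) + whithamKernel (x + y) - 2 * whithamKernel y) * u y

/-- Lebesgue measure on a fundamental period `(−π, π]` of the circle. -/
noncomputable def circMeasure : Measure ℝ := volume.restrict (Set.Ioc (-Real.pi) Real.pi)

/-- The pointwise formula defining the linear operator `T₀`. -/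
noncomputable def T0fun (u₀ v : ℝ → ℝ) (x : ℝ) : ℝ :=
  (1 / (2 * |x| * u₀ x)) * ∫ y in (0 : ℝ)..Real.pi,
    (whithamKernel (x - y) + whithamKernel (x + y) - 2 * whithamKernel y) * y * v y

/-- The defect `F₀ = (𝓛u₀ − u₀²)/(2|x|u₀)`. -/
noncomputable def F0fun (u₀ : ℝ → ℝ) (x : ℝ) : ℝ :=
  (Lcal u₀ x - u₀ x ^ 2) / (2 * |x| * u₀ x)

/-- The closed ball of radius `ε` of even functions in `L^∞` of the circle. -/
noncomputable def Xball (ε : ℝ) : Set (Lp ℝ ⊤ circMeasure) :=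
  {v | ‖v‖ ≤ ε ∧ ∀ᵐ x ∂circMeasure, v (-x) = v x}

/-!
By the Neumann series, `‖(I - T₀)⁻¹‖ ≤ 1 / (1 - ‖T₀‖) ≤ β`. In `L^∞` the quadratic term
`N v = m v²`, `m = |x| / (2u₀)`, satisfies `‖N v‖ ≤ α₀ ‖v‖²` and
`‖N v - N w‖ ≤ α₀ (‖v‖ + ‖w‖) ‖v - w‖`, so `G₀` maps the ball of radius `ε₀` into the ball of
radius `β (δ₀ + α₀ ε₀²)` and is `2α₀βε₀`-Lipschitz there. The admissible `ε₀` are those between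
the smaller root of `α₀β ε² - ε + βδ₀` and its vertex, where `β (δ₀ + α₀ ε₀²) ≤ ε₀`.
Since the kernel is even, `T₀`, `F₀` and `m` are even, so `G₀` preserves the closed subspace of
even functions, and Banach's fixed point theorem applies on `X_{ε₀}`.
-/

open scoped ENNReal

lemma whithamKernel_neg (x : ℝ) : whithamKernel (-x) = whithamKernel x := by
  simp only [whithamKernel, abs_neg, mul_neg, Real.cos_neg, pow_mul, neg_sq]

lemma whithamKernel_neg_sub_add_neg_add (x y : ℝ) :
    whithamKernel (-x - y) + whithamKernel (-x + y) =
      whithamKernel (x - y) + whithamKernel (x + y) := by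
  rw [show -x - y = -(x + y) by ring, show -x + y = -(x - y) by ring, whithamKernel_neg,
    whithamKernel_neg, add_comm]

lemma Lcal_neg (u : ℝ → ℝ) (x : ℝ) : Lcal u (-x) = Lcal u x := by
  simp only [Lcal, whithamKernel_neg_sub_add_neg_add]

lemma F0fun_neg {u₀ : ℝ → ℝ} (hu₀ : ∀ x, u₀ (-x) = u₀ x) (x : ℝ) :
    F0fun u₀ (-x) = F0fun u₀ x := by
  rw [F0fun, F0fun, Lcal_neg, hu₀, abs_neg]

lemma T0fun_neg {u₀ : ℝ → ℝ} (hu₀ : ∀ x, u₀ (-x) = u₀ x) (v : ℝ → ℝ) (x : ℝ) :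
    T0fun u₀ v (-x) = T0fun u₀ v x := by
  simp only [T0fun, hu₀, abs_neg, whithamKernel_neg_sub_add_neg_add]

instance : circMeasure.IsNegInvariant := by
  refine ⟨?_⟩
  have h := (MeasurableEquiv.neg ℝ).restrict_map volume (Set.Ioc (-π) π)
  simp only [MeasurableEquiv.neg_apply, Measure.map_neg_eq_self, Set.neg_preimage, Set.neg_Ioc,
    neg_neg] at h
  rw [Measure.neg, circMeasure, ← Measure.restrict_congr_set Ico_ae_eq_Ioc, ← h,
    Measure.restrict_congr_set Ico_ae_eq_Ioc]

namespace MeasureTheory.Lp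

variable {G E : Type*} [MeasurableSpace G] [Neg G] [MeasurableNeg G] [NormedAddCommGroup E]
  {p : ℝ≥0∞} {μ : Measure G} [μ.IsNegInvariant]

variable (E p μ) in
noncomputable def compNeg : Lp E p μ →+ Lp E p μ :=
  compMeasurePreserving Neg.neg (Measure.measurePreserving_neg μ)

lemma coeFn_compNeg (f : Lp E p μ) : compNeg E p μ f =ᵐ[μ] fun x ↦ f (-x) :=
  coeFn_compMeasurePreserving f _

lemma continuous_compNeg [Fact (1 ≤ p)] : Continuous (compNeg E p μ) :=
  (isometry_compMeasurePreserving _).continuous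

lemma compNeg_eq_self_iff {f : Lp E p μ} : compNeg E p μ f = f ↔ ∀ᵐ x ∂μ, f (-x) = f x :=
  Lp.ext_iff.trans ⟨(coeFn_compNeg f).symm.trans, (coeFn_compNeg f).trans⟩

lemma compNeg_eq_self_of_ae_eq {f : Lp E p μ} {g : G → E} (hfg : f =ᵐ[μ] g)
    (hg : ∀ x, g (-x) = g x) : compNeg E p μ f = f := by
  refine compNeg_eq_self_iff.2 ?_
  filter_upwards [(Measure.measurePreserving_neg μ).quasiMeasurePreserving.ae_eq hfg, hfg]
    with x hneg hx
  rw [Function.comp_apply, Function.comp_apply] at hneg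
  rw [hneg, hx, hg]

lemma compNeg_smul {𝕜 : Type*} [NormedRing 𝕜] [MulActionWithZero 𝕜 E] [IsBoundedSMul 𝕜 E]
    {q r : ℝ≥0∞} [ENNReal.HolderTriple p q r] (f : Lp 𝕜 p μ) (g : Lp E q μ) :
    compNeg E r μ (f • g) = compNeg 𝕜 p μ f • compNeg E q μ g := by
  have hneg := (Measure.measurePreserving_neg μ).quasiMeasurePreserving.ae_eq
    (coeFn_lpSMul (r := r) f g)
  refine Lp.ext_iff.2 ?_
  filter_upwards [coeFn_compNeg (f • g : Lp E r μ), hneg,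
    coeFn_lpSMul (r := r) (compNeg 𝕜 p μ f) (compNeg E q μ g),
    coeFn_compNeg f, coeFn_compNeg g] with x h₁ h₂ h₃ h₄ h₅
  rw [h₁, h₃, Pi.smul_apply', h₄, h₅]
  exact h₂

lemma compNeg_eq_self_of_sub_eq {T : Lp E p μ → Lp E p μ}
    (hT : ∀ v, compNeg E p μ (T v) = T v) {u w : Lp E p μ} (h : u - T u = w)
    (hw : compNeg E p μ w = w) : compNeg E p μ u = u := by
  rw [← sub_add_cancel u (T u), h, map_add, hw, hT]

end MeasureTheory.Lp

lemma mem_Xball_iff {ε : ℝ} {v : Lp ℝ ⊤ circMeasure} :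
    v ∈ Xball ε ↔ ‖v‖ ≤ ε ∧ Lp.compNeg ℝ ⊤ circMeasure v = v := by
  rw [Lp.compNeg_eq_self_iff]; rfl

lemma isClosed_Xball (ε : ℝ) : IsClosed (Xball ε) := by
  have h : Xball ε = Metric.closedBall 0 ε ∩ {v | Lp.compNeg ℝ ⊤ circMeasure v = v} := by
    ext v; rw [mem_Xball_iff, Set.mem_inter_iff, mem_closedBall_zero_iff]; rfl
  rw [h]
  exact Metric.isClosed_closedBall.inter (isClosed_eq Lp.continuous_compNeg continuous_id)

theorem Units.norm_oneSub_inv_le {R : Type*} [NormedRing R] [HasSummableGeomSeries R] (t : R)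
    (ht : ‖t‖ < 1) (h1 : ‖(1 : R)‖ ≤ 1) : ‖(↑(Units.oneSub t ht)⁻¹ : R)‖ ≤ (1 - ‖t‖)⁻¹ :=
  (tsum_geometric_le_of_norm_lt_one t ht).trans (by linarith)

theorem IsClosed.existsUnique_fixedPoint {X : Type*} [MetricSpace X] [CompleteSpace X]
    {s : Set X} (hs : IsClosed s) (hne : s.Nonempty) {f : X → X} (hmaps : Set.MapsTo f s s)
    {K : ℝ} (hK₀ : 0 ≤ K) (hK : K < 1) (hf : ∀ x ∈ s, ∀ y ∈ s, dist (f x) (f y) ≤ K * dist x y) :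
    ∃! x, x ∈ s ∧ f x = x := by
  have := hs.completeSpace_coe
  have := hne.to_subtype
  have hc : ContractingWith ⟨K, hK₀⟩ (hmaps.restrict f s s) :=
    ⟨by exact_mod_cast hK, LipschitzWith.of_dist_le_mul fun x y ↦ hf x x.2 y y.2⟩
  refine ⟨hc.fixedPoint, ⟨(hc.fixedPoint).2, congrArg Subtype.val hc.fixedPoint_isFixedPt⟩, ?_⟩
  rintro y ⟨hy, hfy⟩
  exact congrArg Subtype.val (hc.fixedPoint_unique (x := ⟨y, hy⟩) (Subtype.ext hfy))

lemma mul_add_mul_sq_le_of_root_le {α β δ ε : ℝ} (hα : 0 < α) (hβ : 0 < β) (hδ : 0 ≤ δ)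
    (hδα : δ ≤ 1 / (4 * α * β ^ 2)) (hε₁ : (1 - √(1 - 4 * α * β ^ 2 * δ)) / (2 * α * β) ≤ ε)
    (hε₂ : ε ≤ 1 / (2 * α * β)) : 0 ≤ ε ∧ β * (δ + α * ε ^ 2) ≤ ε := by
  have hαβ : 0 < 2 * α * β := by positivity
  have hdisc : 0 ≤ 1 - 4 * α * β ^ 2 * δ := by
    rw [le_div_iff₀ (by positivity)] at hδα; linarith
  set s := √(1 - 4 * α * β ^ 2 * δ)
  have hs₀ : 0 ≤ s := Real.sqrt_nonneg _
  have hs₁ : s ≤ 1 :=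
    Real.sqrt_le_one.mpr (by nlinarith [mul_nonneg (mul_nonneg hα.le (sq_nonneg β)) hδ])
  have hs₂ : s ^ 2 = 1 - 4 * α * β ^ 2 * δ := Real.sq_sqrt hdisc
  rw [div_le_iff₀ hαβ] at hε₁
  rw [le_div_iff₀ hαβ] at hε₂
  have hε : 0 ≤ ε := nonneg_of_mul_nonneg_left (by nlinarith) hαβ
  refine ⟨hε, ?_⟩
  have key : 0 ≤ 4 * α * β * (ε - β * (δ + α * ε ^ 2)) := by
    nlinarith [mul_nonneg (by linarith : 0 ≤ s - (1 - ε * (2 * α * β)))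
      (by linarith : 0 ≤ s + (1 - ε * (2 * α * β)))]
  nlinarith [mul_pos (mul_pos (by norm_num : (0:ℝ) < 4) hα) hβ]

namespace MeasureTheory.Lp

variable {α 𝕜 : Type*} [MeasurableSpace α] {μ : Measure α} [NormedCommRing 𝕜]

lemma mul_self_sub_mul_self (v w : Lp 𝕜 ⊤ μ) :
    (v • v : Lp 𝕜 ⊤ μ) - w • w = (v + w) • (v - w) := by
  refine Lp.ext_iff.2 ?_
  filter_upwards [coeFn_sub (v • v : Lp 𝕜 ⊤ μ) (w • w), coeFn_lpSMul (r := ⊤) v v,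
    coeFn_lpSMul (r := ⊤) w w, coeFn_lpSMul (r := ⊤) (v + w) (v - w), coeFn_add v w,
    coeFn_sub v w] with x h₁ h₂ h₃ h₄ h₅ h₆
  simp only [h₁, h₂, h₃, h₄, h₅, h₆, Pi.sub_apply, Pi.add_apply, Pi.smul_apply', smul_eq_mul]
  ring

lemma norm_smul_mul_self_le (m v : Lp 𝕜 ⊤ μ) : ‖m • (v • v : Lp 𝕜 ⊤ μ)‖ ≤ ‖m‖ * ‖v‖ ^ 2 := by
  calc ‖m • (v • v : Lp 𝕜 ⊤ μ)‖ ≤ ‖m‖ * ‖(v • v : Lp 𝕜 ⊤ μ)‖ := Lp.norm_smul_le _ _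
    _ ≤ ‖m‖ * ‖v‖ ^ 2 := by rw [sq]; gcongr; exact Lp.norm_smul_le _ _

lemma norm_smul_mul_self_sub_le (m v w : Lp 𝕜 ⊤ μ) :
    ‖m • (v • v : Lp 𝕜 ⊤ μ) - m • (w • w : Lp 𝕜 ⊤ μ)‖ ≤ ‖m‖ * (‖v‖ + ‖w‖) * ‖v - w‖ := by
  rw [sub_eq_add_neg, ← Lp.smul_neg, ← Lp.add_smul, ← sub_eq_add_neg, mul_self_sub_mul_self,
    mul_assoc]
  calc _ ≤ ‖m‖ * ‖((v + w) • (v - w) : Lp 𝕜 ⊤ μ)‖ := Lp.norm_smul_le _ _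
    _ ≤ ‖m‖ * (‖v + w‖ * ‖v - w‖) := by gcongr; exact Lp.norm_smul_le _ _
    _ ≤ ‖m‖ * ((‖v‖ + ‖w‖) * ‖v - w‖) := by gcongr; exact norm_add_le v w

lemma sub_eq_sub_smul_mul_self_iff {f g : α → 𝕜} {u Tu F m v : Lp 𝕜 ⊤ μ} (hF : F =ᵐ[μ] f)
    (hm : m =ᵐ[μ] g) :
    u - Tu = F - m • (v • v : Lp 𝕜 ⊤ μ) ↔ ∀ᵐ x ∂μ, u x - Tu x = f x - g x * v x ^ 2 := by
  have hrhs : ⇑(F - m • (v • v : Lp 𝕜 ⊤ μ)) =ᵐ[μ] fun x ↦ f x - g x * v x ^ 2 := by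
    filter_upwards [coeFn_sub F (m • (v • v : Lp 𝕜 ⊤ μ)), coeFn_lpSMul (r := ⊤) m (v • v),
      coeFn_lpSMul (r := ⊤) v v, hF, hm] with x h₁ h₂ h₃ h₄ h₅
    simp only [h₁, h₂, h₃, h₄, h₅, Pi.sub_apply, Pi.smul_apply', smul_eq_mul, sq]
  rw [Lp.ext_iff]
  exact ⟨fun h ↦ (coeFn_sub u Tu).symm.trans (h.trans hrhs),
    fun h ↦ (coeFn_sub u Tu).trans (Filter.EventuallyEq.trans h hrhs.symm)⟩

end MeasureTheory.Lp

lemma MeasureTheory.MemLp.norm_toLp_top_le {α E : Type*} [MeasurableSpace α] {μ : Measure α}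
    [NormedAddCommGroup E] {f : α → E} (hf : MemLp f ⊤ μ) {C : ℝ} (hC : 0 ≤ C)
    (h : ∀ᵐ x ∂μ, ‖f x‖ ≤ C) : ‖hf.toLp f‖ ≤ C := by
  rw [Lp.norm_toLp, eLpNorm_exponent_top]
  exact ENNReal.toReal_le_of_le_ofReal hC (eLpNormEssSup_le_of_ae_bound h)

lemma exists_Lp_ae_eq_abs_div {u₀ : ℝ → ℝ} (hu₀even : ∀ x, u₀ (-x) = u₀ x)
    (hu₀cont : Continuous u₀) {α₀ : ℝ} (hα₀₀ : 0 ≤ α₀)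
    (hα₀ : α₀ ∈ upperBounds {r : ℝ | ∃ x : ℝ, 0 < |x| ∧ |x| ≤ π ∧ r = |x / (2 * u₀ x)|}) :
    ∃ M : Lp ℝ ⊤ circMeasure, M =ᵐ[circMeasure] (fun x ↦ |x| / (2 * u₀ x)) ∧ ‖M‖ ≤ α₀ ∧
      Lp.compNeg ℝ ⊤ circMeasure M = M := by
  have hbound : ∀ᵐ x ∂circMeasure, ‖|x| / (2 * u₀ x)‖ ≤ α₀ := by
    filter_upwards [(ae_restrict_mem measurableSet_Ioc : ∀ᵐ x ∂circMeasure, x ∈ Set.Ioc (-π) π),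
      (ae_restrict_of_ae (Measure.ae_ne volume 0) : ∀ᵐ x ∂circMeasure, x ≠ 0)] with x hx hx₀
    rw [Real.norm_eq_abs, abs_div, abs_abs, ← abs_div]
    exact hα₀ ⟨x, abs_pos.2 hx₀, abs_le.2 ⟨hx.1.le, hx.2⟩, rfl⟩
  have hmem : MemLp (fun x ↦ |x| / (2 * u₀ x)) ⊤ circMeasure :=
    memLp_top_of_bound
      (continuous_abs.measurable.div (hu₀cont.measurable.const_mul 2)).aestronglyMeasurable
      α₀ hbound
  exact ⟨hmem.toLp _, hmem.coeFn_toLp, hmem.norm_toLp_top_le hα₀₀ hbound,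
    Lp.compNeg_eq_self_of_ae_eq hmem.coeFn_toLp fun x ↦ by rw [abs_neg, hu₀even]⟩

section FixedPointMap

local notation "L∞" => Lp ℝ ⊤ circMeasure

variable {S : L∞ →L[ℝ] L∞} {F M : L∞} {α β δ ε : ℝ}

lemma mapsTo_Xball (hS : ‖S‖ ≤ β) (hF : ‖F‖ ≤ δ) (hM : ‖M‖ ≤ α)
    (hq : β * (δ + α * ε ^ 2) ≤ ε)
    (hSeven : ∀ w, Lp.compNeg ℝ ⊤ circMeasure w = w → Lp.compNeg ℝ ⊤ circMeasure (S w) = S w)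
    (hFeven : Lp.compNeg ℝ ⊤ circMeasure F = F) (hMeven : Lp.compNeg ℝ ⊤ circMeasure M = M) :
    Set.MapsTo (fun v ↦ S (F - M • (v • v : L∞))) (Xball ε) (Xball ε) := by
  intro v hv
  rw [mem_Xball_iff] at hv ⊢
  refine ⟨?_, hSeven _ (by rw [map_sub, Lp.compNeg_smul, Lp.compNeg_smul, hFeven, hMeven, hv.2])⟩
  have hα : 0 ≤ α := (norm_nonneg M).trans hM
  have hβ : 0 ≤ β := (norm_nonneg S).trans hS
  calc ‖S (F - M • (v • v : L∞))‖ ≤ ‖S‖ * ‖F - M • (v • v : L∞)‖ := S.le_opNorm _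
    _ ≤ β * (‖F‖ + ‖M‖ * ‖v‖ ^ 2) := by
      gcongr
      exact (norm_sub_le _ _).trans (add_le_add_right (Lp.norm_smul_mul_self_le M v) _)
    _ ≤ β * (δ + α * ε ^ 2) := by
      gcongr
      exact hv.1
    _ ≤ ε := hq

lemma norm_sub_le_of_mem_Xball (hS : ‖S‖ ≤ β) (hM : ‖M‖ ≤ α) {v w : L∞} (hv : v ∈ Xball ε)
    (hw : w ∈ Xball ε) :
    ‖S (F - M • (v • v : L∞)) - S (F - M • (w • w : L∞))‖ ≤ 2 * α * β * ε * ‖v - w‖ := by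
  have hα : 0 ≤ α := (norm_nonneg M).trans hM
  have hβ : 0 ≤ β := (norm_nonneg S).trans hS
  rw [← map_sub, sub_sub_sub_cancel_left]
  calc ‖S (M • (w • w : L∞) - M • (v • v : L∞))‖
      ≤ ‖S‖ * (‖M‖ * (‖w‖ + ‖v‖) * ‖w - v‖) :=
        (S.le_opNorm _).trans (by gcongr; exact Lp.norm_smul_mul_self_sub_le M w v)
    _ ≤ β * (α * (ε + ε) * ‖w - v‖) := by gcongr; exacts [hw.1, hv.1]
    _ = 2 * α * β * ε * ‖v - w‖ := by rw [norm_sub_rev]; ring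

end FixedPointMap

theorem linearized_whitham_fixed_point_general
    (u₀ : ℝ → ℝ) (hu₀even : ∀ x : ℝ, u₀ (-x) = u₀ x)
    (hu₀cont : Continuous u₀)
    (α₀ : ℝ) (hα₀pos : 0 < α₀)
    (hα₀ : IsLUB {r : ℝ | ∃ x : ℝ, 0 < |x| ∧ |x| ≤ Real.pi ∧ r = |x / (2 * u₀ x)|} α₀)
    (hF₀ : MemLp (F0fun u₀) ⊤ circMeasure)
    (δ₀ : ℝ) (hδ₀ : δ₀ = (eLpNorm (F0fun u₀) ⊤ circMeasure).toReal)
    (T₀ : Lp ℝ ⊤ circMeasure →L[ℝ] Lp ℝ ⊤ circMeasure)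
    (hT₀ : ∀ v : Lp ℝ ⊤ circMeasure,
      ∀ᵐ x ∂circMeasure, (T₀ v : ℝ → ℝ) x = T0fun u₀ (v : ℝ → ℝ) x)
    (c : ℝ) (hc1 : c < 1) (hT₀norm : ‖T₀‖ ≤ c)
    (β : ℝ) (hβ : β = 1 / (1 - c))
    (hδ₀small : δ₀ ≤ 1 / (4 * α₀ * β ^ 2)) :
    -- (i) invertibility of `I − T₀` with inverse of norm at most `β`
    (∃ S : Lp ℝ ⊤ circMeasure →L[ℝ] Lp ℝ ⊤ circMeasure,
        S.comp (ContinuousLinearMap.id ℝ (Lp ℝ ⊤ circMeasure) - T₀)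
            = ContinuousLinearMap.id ℝ (Lp ℝ ⊤ circMeasure) ∧
        (ContinuousLinearMap.id ℝ (Lp ℝ ⊤ circMeasure) - T₀).comp S
            = ContinuousLinearMap.id ℝ (Lp ℝ ⊤ circMeasure) ∧
        ‖S‖ ≤ β) ∧
    ∀ ε₀ : ℝ, (1 - Real.sqrt (1 - 4 * α₀ * β ^ 2 * δ₀)) / (2 * α₀ * β) ≤ ε₀ →
      ε₀ ≤ 1 / (2 * α₀ * β) →
      -- (ii) `G₀` maps `X_{ε₀}` into itself and is `2α₀βε₀`-Lipschitz there
      ((∃ G₀ : Lp ℝ ⊤ circMeasure → Lp ℝ ⊤ circMeasure,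
          (∀ v ∈ Xball ε₀, G₀ v ∈ Xball ε₀ ∧
            ∀ᵐ x ∂circMeasure,
              (G₀ v : ℝ → ℝ) x - (T₀ (G₀ v) : ℝ → ℝ) x
                = F0fun u₀ x - |x| / (2 * u₀ x) * ((v : ℝ → ℝ) x) ^ 2) ∧
          ∀ v ∈ Xball ε₀, ∀ w ∈ Xball ε₀,
            ‖G₀ v - G₀ w‖ ≤ 2 * α₀ * β * ε₀ * ‖v - w‖) ∧
      -- (iii) existence and uniqueness of the fixed point
      (ε₀ < 1 / (2 * α₀ * β) →
        ∃! v₀ : Lp ℝ ⊤ circMeasure, v₀ ∈ Xball ε₀ ∧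
          ∀ᵐ x ∂circMeasure,
            (v₀ : ℝ → ℝ) x - (T₀ v₀ : ℝ → ℝ) x
              = F0fun u₀ x - |x| / (2 * u₀ x) * ((v₀ : ℝ → ℝ) x) ^ 2)) := by
  have hT₀lt : ‖T₀‖ < 1 := hT₀norm.trans_lt hc1
  set U := Units.oneSub T₀ hT₀lt
  set S : Lp ℝ ⊤ circMeasure →L[ℝ] Lp ℝ ⊤ circMeasure := ↑U⁻¹
  have hSnorm : ‖S‖ ≤ β := by
    refine (Units.norm_oneSub_inv_le T₀ hT₀lt ContinuousLinearMap.norm_id_le).trans ?_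
    rw [hβ, one_div]
    exact inv_anti₀ (by linarith) (by linarith)
  have hS : ∀ w, S w - T₀ (S w) = w := fun w ↦ congr($(U.mul_inv) w)
  have hS' : ∀ w, S (w - T₀ w) = w := fun w ↦ congr($(U.inv_mul) w)
  have hT₀even v : Lp.compNeg ℝ ⊤ circMeasure (T₀ v) = T₀ v :=
    Lp.compNeg_eq_self_of_ae_eq (hT₀ v) (T0fun_neg hu₀even _)
  set F := hF₀.toLp (F0fun u₀)
  have hFnorm : ‖F‖ = δ₀ := by rw [Lp.norm_toLp, hδ₀]
  have hFeven := Lp.compNeg_eq_self_of_ae_eq hF₀.coeFn_toLp (F0fun_neg hu₀even)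
  obtain ⟨M, hMae, hMnorm, hMeven⟩ := exists_Lp_ae_eq_abs_div hu₀even hu₀cont hα₀pos.le hα₀.1
  have heq v u : u - T₀ u = F - M • (v • v) ↔ _ :=
    Lp.sub_eq_sub_smul_mul_self_iff hF₀.coeFn_toLp hMae
  refine ⟨⟨S, U.inv_mul, U.mul_inv, hSnorm⟩, fun ε₀ hε₁ hε₂ ↦ ?_⟩
  have hβ₀ : 0 < β := by rw [hβ]; exact one_div_pos.2 (by linarith)
  obtain ⟨hε₀, hq⟩ := mul_add_mul_sq_le_of_root_le hα₀pos hβ₀ (hδ₀ ▸ ENNReal.toReal_nonneg)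
    hδ₀small hε₁ hε₂
  have hmaps := mapsTo_Xball hSnorm hFnorm.le hMnorm hq
    (fun w hw ↦ Lp.compNeg_eq_self_of_sub_eq hT₀even (hS w) hw) hFeven hMeven
  have hlip v (hv : v ∈ Xball ε₀) w (hw : w ∈ Xball ε₀) :=
    norm_sub_le_of_mem_Xball (F := F) hSnorm hMnorm hv hw
  refine ⟨⟨_, fun v hv ↦ ⟨hmaps hv, (heq v _).1 (hS _)⟩, hlip⟩, fun hε₃ ↦ ?_⟩
  have hfix v : S (F - M • (v • v)) = v ↔ v - T₀ v = F - M • (v • v) :=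
    ⟨fun h ↦ by rw [← hS (F - _), h], fun h ↦ by rw [← h, hS']⟩
  have hK : 2 * α₀ * β * ε₀ < 1 := by rwa [lt_div_iff₀ (by positivity), mul_comm] at hε₃
  simpa only [hfix, heq] using (isClosed_Xball ε₀).existsUnique_fixedPoint
    ⟨0, by simp [mem_Xball_iff, hε₀]⟩ hmaps (by positivity) hK
    (by simpa only [dist_eq_norm] using hlip)

/-- Fixed point scheme for the linearized reduced Whitham equation:
if the defect `δ₀ = ‖F₀‖_{L^∞}` satisfies `δ₀ ≤ 1/(4α₀β²)` where `β = 1/(1−c)` and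
`‖T₀‖ ≤ c < 1`, then `I − T₀` is invertible with `‖(I−T₀)⁻¹‖ ≤ β`, the map
`G₀(v) = (I−T₀)⁻¹(F₀ − (|x|/(2u₀))v²)` maps the ball `X_{ε₀}` of even `L^∞` functions
into itself with Lipschitz constant `2α₀βε₀`, and for `ε₀ < 1/(2α₀β)` there is a unique
fixed point `v₀ ∈ X_{ε₀}` solving `(I−T₀)v₀ = F₀ − (|x|/(2u₀))v₀²`. -/
theorem linearized_whitham_fixed_point
    (u₀ : ℝ → ℝ) (hu₀even : ∀ x : ℝ, u₀ (-x) = u₀ x)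
    (hu₀per : Function.Periodic u₀ (2 * Real.pi)) (hu₀cont : Continuous u₀)
    (hu₀pos : ∀ x : ℝ, 0 < |x| → |x| ≤ Real.pi → 0 < u₀ x)
    (α₀ : ℝ) (hα₀pos : 0 < α₀)
    (hα₀ : IsLUB {r : ℝ | ∃ x : ℝ, 0 < |x| ∧ |x| ≤ Real.pi ∧ r = |x / (2 * u₀ x)|} α₀)
    (hF₀ : MemLp (F0fun u₀) ⊤ circMeasure)
    (δ₀ : ℝ) (hδ₀ : δ₀ = (eLpNorm (F0fun u₀) ⊤ circMeasure).toReal)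
    (T₀ : Lp ℝ ⊤ circMeasure →L[ℝ] Lp ℝ ⊤ circMeasure)
    (hT₀ : ∀ v : Lp ℝ ⊤ circMeasure,
      ∀ᵐ x ∂circMeasure, (T₀ v : ℝ → ℝ) x = T0fun u₀ (v : ℝ → ℝ) x)
    (c : ℝ) (hc1 : c < 1) (hT₀norm : ‖T₀‖ ≤ c)
    (β : ℝ) (hβ : β = 1 / (1 - c))
    (hδ₀small : δ₀ ≤ 1 / (4 * α₀ * β ^ 2)) :
    -- (i) invertibility of `I − T₀` with inverse of norm at most `β`
    (∃ S : Lp ℝ ⊤ circMeasure →L[ℝ] Lp ℝ ⊤ circMeasure,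
        S.comp (ContinuousLinearMap.id ℝ (Lp ℝ ⊤ circMeasure) - T₀)
            = ContinuousLinearMap.id ℝ (Lp ℝ ⊤ circMeasure) ∧
        (ContinuousLinearMap.id ℝ (Lp ℝ ⊤ circMeasure) - T₀).comp S
            = ContinuousLinearMap.id ℝ (Lp ℝ ⊤ circMeasure) ∧
        ‖S‖ ≤ β) ∧
    ∀ ε₀ : ℝ, (1 - Real.sqrt (1 - 4 * α₀ * β ^ 2 * δ₀)) / (2 * α₀ * β) ≤ ε₀ →
      ε₀ ≤ 1 / (2 * α₀ * β) →
      -- (ii) `G₀` maps `X_{ε₀}` into itself and is `2α₀βε₀`-Lipschitz there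
      ((∃ G₀ : Lp ℝ ⊤ circMeasure → Lp ℝ ⊤ circMeasure,
          (∀ v ∈ Xball ε₀, G₀ v ∈ Xball ε₀ ∧
            ∀ᵐ x ∂circMeasure,
              (G₀ v : ℝ → ℝ) x - (T₀ (G₀ v) : ℝ → ℝ) x
                = F0fun u₀ x - |x| / (2 * u₀ x) * ((v : ℝ → ℝ) x) ^ 2) ∧
          ∀ v ∈ Xball ε₀, ∀ w ∈ Xball ε₀,
            ‖G₀ v - G₀ w‖ ≤ 2 * α₀ * β * ε₀ * ‖v - w‖) ∧
      -- (iii) existence and uniqueness of the fixed point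
      (ε₀ < 1 / (2 * α₀ * β) →
        ∃! v₀ : Lp ℝ ⊤ circMeasure, v₀ ∈ Xball ε₀ ∧
          ∀ᵐ x ∂circMeasure,
            (v₀ : ℝ → ℝ) x - (T₀ v₀ : ℝ → ℝ) x
              = F0fun u₀ x - |x| / (2 * u₀ x) * ((v₀ : ℝ → ℝ) x) ^ 2)) :=
  linearized_whitham_fixed_point_general u₀ hu₀even hu₀cont α₀ hα₀pos hα₀ hF₀ δ₀ hδ₀ T₀ hT₀ c hc1
    hT₀norm β hβ hδ₀small
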